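/- arXiv:math-ph/0411012 — 2 statements merged into one kernel-verified Lean document; each statement's English description precedes it below -/
import Mathlib

section
/- Let a₁, a₂ ∈ ℝ² be linearly independent over ℝ and let Γ = { l₁a₁ + l₂a₂ : l₁, l₂ ∈ ℤ }. Let H : ℝ² → ℝ be smooth and Γ-periodic. For i = 1, 2 let γᵢ : ℝ → ℝ² be a continuously differentiable solution of γᵢ'(t) = ( −∂H/∂y₂(γᵢ(t)), ∂H/∂y₁(γᵢ(t)) ), and suppose there are Tᵢ > 0 and dᵢ = (dᵢ₁, dᵢ₂) ∈ ℤ² with dᵢ ≠ (0,0) such that γᵢ(t+Tᵢ) = γᵢ(t) + dᵢ₁a₁ + dᵢ₂a₂ for all t. Then d₁ and d₂ are proportional: d₁₁·d₂₂ − d₁₂·d₂₁ = 0. -/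
/-!
Suppose the drift vectors `vᵢ = dᵢ₁ a₁ + dᵢ₂ a₂` were linearly independent. In coordinates
sending `v₁ ↦ 1` and `v₂ ↦ i`, the map `s + i t ↦ γ₁ (T₁ s) - γ₂ (-T₂ t)` differs from the
identity by a doubly periodic, hence bounded, function, so a winding-number argument gives it a
zero: the two orbits meet. By uniqueness of solutions `γ₁` is then a time translate of `γ₂`, so
it drifts by `v₁` in time `T₁` and by `v₂` in time `T₂`. Its `v₁`-coordinate is then
`T₂`-periodic, hence bounded, yet grows by `1` in every time `T₁`.
-/

open Real

noncomputable section

/-- Partial derivative in the first variable of a real function on `ℝ × ℝ`. -/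
def rpd1 (f : ℝ × ℝ → ℝ) (x : ℝ × ℝ) : ℝ := deriv (fun t => f (t, x.2)) x.1

/-- Partial derivative in the second variable of a real function on `ℝ × ℝ`. -/
def rpd2 (f : ℝ × ℝ → ℝ) (x : ℝ × ℝ) : ℝ := deriv (fun t => f (x.1, t)) x.2

theorem rpd1_eq_fderiv {H : ℝ × ℝ → ℝ} {x : ℝ × ℝ} (hH : DifferentiableAt ℝ H x) :
    rpd1 H x = fderiv ℝ H x (1, 0) := by
  have hline : HasDerivAt (fun t : ℝ => (t, x.2)) ((1, 0) : ℝ × ℝ) x.1 :=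
    (hasDerivAt_id x.1).prodMk (hasDerivAt_const _ _)
  exact (hH.hasFDerivAt.comp_hasDerivAt x.1 hline).deriv

theorem rpd2_eq_fderiv {H : ℝ × ℝ → ℝ} {x : ℝ × ℝ} (hH : DifferentiableAt ℝ H x) :
    rpd2 H x = fderiv ℝ H x (0, 1) := by
  have hline : HasDerivAt (fun t : ℝ => (x.1, t)) ((0, 1) : ℝ × ℝ) x.2 :=
    (hasDerivAt_const _ _).prodMk (hasDerivAt_id x.2)
  exact (hH.hasFDerivAt.comp_hasDerivAt x.2 hline).deriv

def hamiltonianVectorField (H : ℝ × ℝ → ℝ) (y : ℝ × ℝ) : ℝ × ℝ := (-rpd2 H y, rpd1 H y)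

theorem contDiff_hamiltonianVectorField {n : WithTop ℕ∞} {H : ℝ × ℝ → ℝ}
    (hH : ContDiff ℝ (n + 1) H) : ContDiff ℝ n (hamiltonianVectorField H) := by
  have hdiff : Differentiable ℝ H := hH.differentiable (by simp)
  have hfd := hH.fderiv_right le_rfl
  let J : ((ℝ × ℝ) →L[ℝ] ℝ) →L[ℝ] ℝ × ℝ :=
    (-ContinuousLinearMap.apply ℝ ℝ ((0, 1) : ℝ × ℝ)).prod
      (ContinuousLinearMap.apply ℝ ℝ ((1, 0) : ℝ × ℝ))
  convert J.contDiff.comp hfd using 1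
  ext y <;> simp [J, hamiltonianVectorField, rpd1_eq_fderiv (hdiff y), rpd2_eq_fderiv (hdiff y)]

theorem contDiff_one_of_hasDerivAt {E : Type*} [NormedAddCommGroup E] [NormedSpace ℝ E]
    {V : E → E} (hV : Continuous V) {γ : ℝ → E} (hγ : ∀ t, HasDerivAt γ (V (γ t)) t) :
    ContDiff ℝ 1 γ := by
  have hγc : Continuous γ := continuous_iff_continuousAt.2 fun t => (hγ t).continuousAt
  refine contDiff_one_iff_deriv.2 ⟨fun t => (hγ t).differentiableAt, ?_⟩
  rw [show deriv γ = V ∘ γ from funext fun t => (hγ t).deriv]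
  exact hV.comp hγc

theorem ODE_solution_unique_of_contDiff {E : Type*} [NormedAddCommGroup E] [NormedSpace ℝ E]
    {V : E → E} (hV : ContDiff ℝ 1 V) {f g : ℝ → E} (hf : ∀ t, HasDerivAt f (V (f t)) t)
    (hg : ∀ t, HasDerivAt g (V (g t)) t) {t₀ : ℝ} (h : f t₀ = g t₀) : f = g := by
  funext t
  obtain ⟨a, b, ht₀, ht⟩ : ∃ a b, t₀ ∈ Set.Ioo a b ∧ t ∈ Set.Icc a b :=
    ⟨min t t₀ - 1, max t t₀ + 1, by constructor <;> grind, by constructor <;> grind⟩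
  have hfc : Continuous f := continuous_iff_continuousAt.2 fun t => (hf t).continuousAt
  have hgc : Continuous g := continuous_iff_continuousAt.2 fun t => (hg t).continuousAt
  set S := f '' Set.Icc a b ∪ g '' Set.Icc a b
  have hS : IsCompact S := (isCompact_Icc.image hfc).union (isCompact_Icc.image hgc)
  obtain ⟨K, hK⟩ :=
    (hV.locallyLipschitz.locallyLipschitzOn (s := S)).exists_lipschitzOnWith_of_compact hS
  exact ODE_solution_unique_of_mem_Icc (v := fun _ => V) (s := fun _ => S) (fun _ _ => hK) ht₀
    hfc.continuousOn (fun t _ => hf t) (fun t ht => .inl ⟨t, Set.Ioo_subset_Icc_self ht, rfl⟩)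
    hgc.continuousOn (fun t _ => hg t) (fun t ht => .inr ⟨t, Set.Ioo_subset_Icc_self ht, rfl⟩)
    h ht

theorem map_add_zsmul_of_map_add {G M : Type*} [AddCommGroup G] [AddCommGroup M] {f : G → M}
    {τ : G} {w : M} (h : ∀ t, f (t + τ) = f t + w) (n : ℤ) (t : G) :
    f (t + n • τ) = f t + n • w := by
  induction n using Int.induction_on generalizing t with
  | zero => simp
  | succ n ih => rw [add_zsmul, one_zsmul, ← add_assoc, h, ih, add_zsmul, one_zsmul, add_assoc]
  | pred n ih =>
    have step := h (t + (-(n : ℤ) - 1) • τ)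
    rw [add_assoc, ← add_one_zsmul, sub_add_cancel, ih] at step
    rw [eq_sub_of_add_eq step.symm, sub_zsmul, one_zsmul]
    abel

theorem exists_bound_of_continuous_of_periodic {ι E F : Type*} [Fintype ι]
    [NormedAddCommGroup E] [NormedSpace ℝ E] [FiniteDimensional ℝ E] [SeminormedAddCommGroup F]
    (b : Module.Basis ι ℝ E) {f : E → F} (hf : Continuous f)
    (hper : ∀ y (l : ι → ℤ), f (y + ∑ i, l i • b i) = f y) : ∃ C, ∀ y, ‖f y‖ ≤ C := by
  obtain ⟨C, hC⟩ := (ZSpan.fundamentalDomain_isBounded b).isCompact_closure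
    |>.exists_bound_of_continuousOn hf.continuousOn
  refine ⟨C, fun y => ?_⟩
  have hy : y = ZSpan.fract b y + ∑ i, ⌊b.repr y i⌋ • b i := by
    simp [ZSpan.fract_apply, ZSpan.floor]
  rw [hy, hper]
  exact hC _ (subset_closure (ZSpan.fract_mem_fundamentalDomain b y))

theorem not_continuous_of_drift_basis {ι E : Type*} [NormedAddCommGroup E] [NormedSpace ℝ E]
    [FiniteDimensional ℝ E] (b : Module.Basis ι ℝ E) {i j : ι} (hij : i ≠ j) {γ : ℝ → E}
    {T₁ T₂ : ℝ} (hper₁ : ∀ t, γ (t + T₁) = γ t + b i) (hper₂ : ∀ t, γ (t + T₂) = γ t + b j) :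
    ¬Continuous γ := by
  intro hγ
  -- the `i`-th coordinate of `γ` is `T₂`-periodic, hence bounded, but grows by `1` every `T₁`
  set g : ℝ → ℝ := fun t => b.coord i (γ t)
  have hg : Continuous g := (LinearMap.continuous_of_finiteDimensional _).comp hγ
  have hT₂ : T₂ ≠ 0 := by
    rintro rfl
    exact b.ne_zero j (by simpa using hper₂ 0)
  have hper : Function.Periodic g T₂ := fun t => by
    simp [g, hper₂, Module.Basis.coord_apply, Finsupp.single_eq_of_ne hij]
  obtain ⟨C, hC⟩ := isBounded_iff_forall_norm_le.1 (hper.isBounded_of_continuous hT₂ hg)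
  obtain ⟨n, hn⟩ := exists_int_gt (C - g 0)
  have hgn : g (n • T₁) = g 0 + n := by
    have hγn := map_add_zsmul_of_map_add hper₁ n 0
    rw [zero_add] at hγn
    simp only [g]
    rw [hγn]
    simp [Module.Basis.coord_apply]
  linarith [(le_abs_self _).trans (hC _ ⟨n • T₁, rfl⟩)]

open Complex in
theorem exists_integral_div_eq_int_mul_two_pi_I {F F' : ℝ → ℂ} {a b : ℝ}
    (hF : ∀ θ, HasDerivAt F (F' θ) θ) (hF' : Continuous F') (hne : ∀ θ, F θ ≠ 0)
    (hab : F b = F a) : ∃ n : ℤ, ∫ θ in a..b, F' θ / F θ = n * (2 * π * I) := by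
  have hFc : Continuous F := continuous_iff_continuousAt.2 fun θ => (hF θ).continuousAt
  have hq : Continuous fun θ => F' θ / F θ := hF'.div hFc hne
  set g : ℝ → ℂ := fun θ => ∫ s in a..θ, F' s / F s
  have hg : ∀ θ, HasDerivAt g (F' θ / F θ) θ := fun θ =>
    (hq.integral_hasStrictDerivAt a θ).hasDerivAt
  -- `F * exp (-g)` is constant, so `exp (-g b) = exp (-g a) = 1`
  have hconst : ∀ θ, HasDerivAt (fun θ => F θ * exp (-g θ)) 0 θ := by
    intro θ
    refine ((hF θ).mul (hg θ).neg.cexp).congr_deriv ?_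
    simp only [Pi.neg_apply]
    field_simp [hne θ]
    ring
  have hexp : exp (-g b) = 1 := by
    have := is_const_of_deriv_eq_zero (fun θ => (hconst θ).differentiableAt)
      (fun θ => (hconst θ).deriv) b a
    simp only [g, intervalIntegral.integral_same, neg_zero, Complex.exp_zero, hab] at this
    exact mul_left_cancel₀ (hne a) this
  obtain ⟨n, hn⟩ := exp_eq_one_iff.1 hexp
  exact ⟨-n, by push_cast; linear_combination -hn⟩

open Complex in
theorem integral_div_eq_of_homotopy {F F' : ℝ → ℝ → ℂ} {a b : ℝ}
    (hF : Continuous (Function.uncurry F)) (hF' : Continuous (Function.uncurry F'))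
    (hderiv : ∀ u θ, HasDerivAt (F u) (F' u θ) θ) (hne : ∀ u θ, F u θ ≠ 0)
    (hab : ∀ u, F u b = F u a) (u₀ u₁ : ℝ) :
    ∫ θ in a..b, F' u₀ θ / F u₀ θ = ∫ θ in a..b, F' u₁ θ / F u₁ θ := by
  set w : ℝ → ℂ := fun u => ∫ θ in a..b, F' u θ / F u θ
  have hw : Continuous w :=
    intervalIntegral.continuous_parametric_intervalIntegral_of_continuous'
      (hF'.div hF fun p => hne p.1 p.2) a b
  have hint : ∀ u, ∃ n : ℤ, w u = n * (2 * π * I) := fun u =>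
    exists_integral_div_eq_int_mul_two_pi_I (hderiv u)
      (hF'.uncurry_left u) (hne u) (hab u)
  -- the imaginary part of `w` is continuous with values in the discrete set `2πℤ`
  have him : (w u₀).im = (w u₁).im := by
    have hdisc : DiscreteTopology (AddSubgroup.zmultiples (2 * π)) := inferInstance
    refine isPreconnected_univ.constant_of_mapsTo (T := (AddSubgroup.zmultiples (2 * π) : Set ℝ))
      (isDiscrete_iff_discreteTopology.2 hdisc) (continuous_im.comp hw).continuousOn
      (fun u _ => ?_) trivial trivial
    obtain ⟨n, hn⟩ := hint u
    exact AddSubgroup.mem_zmultiples_iff.2 ⟨n, by simp [hn]⟩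
  refine Complex.ext ?_ him
  obtain ⟨n₀, hn₀⟩ := hint u₀
  obtain ⟨n₁, hn₁⟩ := hint u₁
  change (w u₀).re = (w u₁).re
  rw [hn₀, hn₁]
  simp

open Complex in
theorem exists_eq_zero_of_norm_sub_le {Φ : ℂ → ℂ} (hΦ : ContDiff ℝ 1 Φ) {C : ℝ}
    (hC : ∀ z, ‖Φ z - z‖ ≤ C) : ∃ z, Φ z = 0 := by
  by_contra! hne
  have hdΦ : ∀ z, HasFDerivAt Φ (fderiv ℝ Φ z) z := fun z =>
    (hΦ.differentiable one_ne_zero z).hasFDerivAt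
  have hΦ' := hΦ.continuous_fderiv one_ne_zero
  set R := C + 1
  have hR : 0 < R := by linarith [(norm_nonneg _).trans (hC 0)]
  set c : ℝ → ℂ := fun θ => R * exp (θ * I)
  have hc : ∀ θ, HasDerivAt c (c θ * I) θ := fun θ => by
    simpa [c, mul_assoc] using
      ((hasDerivAt_id (θ : ℂ)).comp_ofReal.mul_const I).cexp.const_mul (R : ℂ)
  have hc_norm : ∀ θ, ‖c θ‖ = R := fun θ => by simp [c, norm_exp_ofReal_mul_I, hR.le]
  have hc_per : c (2 * π) = c 0 := by simp [c, exp_two_pi_mul_I]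
  have hcircle : ∫ θ in (0 : ℝ)..2 * π, c θ * I / c θ = 2 * π * I := by
    have hc0 : ∀ θ, c θ ≠ 0 := fun θ => norm_pos_iff.1 (hc_norm θ ▸ hR)
    simp [mul_div_cancel_left₀ _ (hc0 _)]
  -- straight-line homotopy from `c` to `Φ ∘ c`, which avoids `0` since `‖c‖ > C`
  set s : ℝ → ℝ := fun u => Set.projIcc 0 1 zero_le_one u
  have hA := integral_div_eq_of_homotopy (a := 0) (b := 2 * π)
    (F := fun u θ => c θ + s u * (Φ (c θ) - c θ))
    (F' := fun u θ => c θ * I + s u * (fderiv ℝ Φ (c θ) (c θ * I) - c θ * I))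
    (by fun_prop) (by fun_prop)
    (fun u θ => (hc θ).add ((((hdΦ _).comp_hasDerivAt θ (hc θ)).sub (hc θ)).const_mul _))
    (fun u θ h => by
      have hs : ‖(s u : ℂ)‖ ≤ 1 := by
        rw [norm_real, norm_of_nonneg (Set.projIcc 0 1 zero_le_one u).2.1]
        exact (Set.projIcc 0 1 zero_le_one u).2.2
      have : ‖c θ‖ ≤ C := calc
        ‖c θ‖ = ‖(s u : ℂ) * (Φ (c θ) - c θ)‖ := by
          rw [eq_neg_of_add_eq_zero_right h, norm_neg]
        _ ≤ 1 * C := by rw [norm_mul]; gcongr; exact hC _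
        _ = C := one_mul C
      linarith [hc_norm θ])
    (fun u => by simp only [hc_per]) 0 1
  -- contraction of `Φ ∘ c` to the constant loop at `Φ 0`
  have hB := integral_div_eq_of_homotopy (a := 0) (b := 2 * π)
    (F := fun u θ => Φ (u * c θ))
    (F' := fun u θ => fderiv ℝ Φ (u * c θ) (u * (c θ * I)))
    (by fun_prop) (by fun_prop)
    (fun u θ => (hdΦ _).comp_hasDerivAt θ ((hc θ).const_mul (u : ℂ)))
    (fun u θ => hne _) (fun u => by simp only [hc_per]) 0 1
  simp only [s, Set.projIcc_left, Set.projIcc_right, ofReal_zero, ofReal_one, zero_mul, one_mul,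
    add_zero, add_sub_cancel, map_zero, zero_div, intervalIntegral.integral_zero] at hA hB
  rw [hcircle, ← hB] at hA
  simp [pi_ne_zero] at hA

theorem exists_apply_eq_apply_of_drift_basis {E : Type*} [NormedAddCommGroup E]
    [NormedSpace ℝ E] (b : Module.Basis (Fin 2) ℝ E) {γ₁ γ₂ : ℝ → E} (h₁ : ContDiff ℝ 1 γ₁)
    (h₂ : ContDiff ℝ 1 γ₂) {T₁ T₂ : ℝ} (hper₁ : ∀ t, γ₁ (t + T₁) = γ₁ t + b 0)
    (hper₂ : ∀ t, γ₂ (t + T₂) = γ₂ t + b 1) :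
    ∃ s t, γ₁ s = γ₂ t := by
  have := b.finiteDimensional_of_finite
  let P : E ≃L[ℝ] ℂ := (b.equiv Complex.basisOneI (Equiv.refl _)).toContinuousLinearEquiv
  have hP₀ : P (b 0) = 1 := by simp [P]
  have hP₁ : P (b 1) = Complex.I := by simp [P]
  let Φ : ℂ → ℂ := fun z => P (γ₁ (T₁ * z.re) - γ₂ (-(T₂ * z.im)))
  have hΦ : ContDiff ℝ 1 Φ := by
    have hre : ContDiff ℝ 1 fun z : ℂ => T₁ * z.re := contDiff_const.mul Complex.reCLM.contDiff
    have him : ContDiff ℝ 1 fun z : ℂ => -(T₂ * z.im) :=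
      (contDiff_const.mul Complex.imCLM.contDiff).neg
    exact P.contDiff.comp ((h₁.comp hre).sub (h₂.comp him))
  have hshift : ∀ z (m n : ℤ), Φ (z + m + n * Complex.I) = Φ z + m + n * Complex.I := by
    intro z m n
    have hre : (z + m + n * Complex.I).re = z.re + m := by simp
    have him : (z + m + n * Complex.I).im = z.im + n := by simp
    have e₁ : T₁ * (z.re + m) = T₁ * z.re + m • T₁ := by rw [zsmul_eq_mul]; ring
    have e₂ : -(T₂ * (z.im + n)) = -(T₂ * z.im) + (-n) • T₂ := by
      rw [zsmul_eq_mul]; push_cast; ring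
    simp only [Φ, hre, him]
    rw [e₁, e₂, map_add_zsmul_of_map_add hper₁, map_add_zsmul_of_map_add hper₂]
    simp only [map_add, map_sub, map_neg, map_zsmul, hP₀, hP₁, neg_zsmul, zsmul_eq_mul, mul_one]
    ring
  obtain ⟨C, hC⟩ := exists_bound_of_continuous_of_periodic Complex.basisOneI
    (f := fun z => Φ z - z) (hΦ.continuous.sub continuous_id) fun z l => by
      simp [Fin.sum_univ_two, ← add_assoc, hshift]
  obtain ⟨z, hz⟩ := exists_eq_zero_of_norm_sub_le hΦ hC
  exact ⟨_, _, sub_eq_zero.1 (P.map_eq_zero_iff.1 hz)⟩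

theorem LinearIndependent.pair_of_det_ne_zero {K M : Type*} [Field K] [AddCommGroup M]
    [Module K M] {x y : M} (h : LinearIndependent K ![x, y]) {a b c d : K}
    (hdet : a * d - b * c ≠ 0) : LinearIndependent K ![a • x + b • y, c • x + d • y] := by
  rw [LinearIndependent.pair_iff] at h ⊢
  intro s t hst
  obtain ⟨h₁, h₂⟩ := h (s * a + t * c) (s * b + t * d) (by rw [← hst]; module)
  constructor
  · have : s * (a * d - b * c) = 0 := by linear_combination d * h₁ - c * h₂
    exact (mul_eq_zero.1 this).resolve_right hdet
  · have : t * (a * d - b * c) = 0 := by linear_combination a * h₂ - b * h₁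
    exact (mul_eq_zero.1 this).resolve_right hdet

theorem stmt_13_general (a₁ a₂ : ℝ × ℝ) (hindep : LinearIndependent ℝ ![a₁, a₂])
    (H : ℝ × ℝ → ℝ) (hH : ContDiff ℝ (⊤ : ℕ∞) H)
    (γ₁ γ₂ : ℝ → ℝ × ℝ)
    (hγ₁ : ∀ t, HasDerivAt γ₁ (-rpd2 H (γ₁ t), rpd1 H (γ₁ t)) t)
    (hγ₂ : ∀ t, HasDerivAt γ₂ (-rpd2 H (γ₂ t), rpd1 H (γ₂ t)) t)
    (T₁ T₂ : ℝ)
    (d₁₁ d₁₂ d₂₁ d₂₂ : ℤ)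
    (hper₁ : ∀ t, γ₁ (t + T₁) = γ₁ t + d₁₁ • a₁ + d₁₂ • a₂)
    (hper₂ : ∀ t, γ₂ (t + T₂) = γ₂ t + d₂₁ • a₁ + d₂₂ • a₂) :
    d₁₁ * d₂₂ - d₁₂ * d₂₁ = 0 := by
  by_contra hdet
  have hV : ContDiff ℝ 1 (hamiltonianVectorField H) :=
    contDiff_hamiltonianVectorField (hH.of_le (WithTop.coe_le_coe.2 le_top))
  have hv := hindep.pair_of_det_ne_zero (a := (d₁₁ : ℝ)) (b := d₁₂) (c := d₂₁) (d := d₂₂)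
    (by exact_mod_cast hdet)
  simp only [Int.cast_smul_eq_zsmul] at hv
  let b := basisOfLinearIndependentOfCardEqFinrank hv (by simp)
  have hb₁ : ∀ t, γ₁ (t + T₁) = γ₁ t + b 0 := by simp [b, hper₁, add_assoc]
  have hb₂ : ∀ t, γ₂ (t + T₂) = γ₂ t + b 1 := by simp [b, hper₂, add_assoc]
  have hγ₁C := contDiff_one_of_hasDerivAt hV.continuous hγ₁
  obtain ⟨s, t, hst⟩ := exists_apply_eq_apply_of_drift_basis b hγ₁C
    (contDiff_one_of_hasDerivAt hV.continuous hγ₂) hb₁ hb₂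
  have htranslate : γ₁ = fun τ => γ₂ (τ + (t - s)) :=
    ODE_solution_unique_of_contDiff hV hγ₁ (fun τ => (hγ₂ _).comp_add_const τ _) (t₀ := s)
      (by simp [hst])
  have hb₂' : ∀ τ, γ₁ (τ + T₂) = γ₁ τ + b 1 := fun τ => by
    simp only [htranslate]
    rw [add_right_comm, hb₂]
  exact not_continuous_of_drift_basis b zero_ne_one hb₁ hb₂' hγ₁C.continuous

theorem stmt_13 (a₁ a₂ : ℝ × ℝ) (hindep : LinearIndependent ℝ ![a₁, a₂])
    (H : ℝ × ℝ → ℝ) (hH : ContDiff ℝ (⊤ : ℕ∞) H)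
    (hper : ∀ (y : ℝ × ℝ) (l₁ l₂ : ℤ), H (y + l₁ • a₁ + l₂ • a₂) = H y)
    (γ₁ γ₂ : ℝ → ℝ × ℝ)
    (hγ₁ : ∀ t, HasDerivAt γ₁ (-rpd2 H (γ₁ t), rpd1 H (γ₁ t)) t)
    (hγ₂ : ∀ t, HasDerivAt γ₂ (-rpd2 H (γ₂ t), rpd1 H (γ₂ t)) t)
    (T₁ T₂ : ℝ) (hT₁ : 0 < T₁) (hT₂ : 0 < T₂)
    (d₁₁ d₁₂ d₂₁ d₂₂ : ℤ)
    (hd₁ : ¬(d₁₁ = 0 ∧ d₁₂ = 0)) (hd₂ : ¬(d₂₁ = 0 ∧ d₂₂ = 0))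
    (hper₁ : ∀ t, γ₁ (t + T₁) = γ₁ t + d₁₁ • a₁ + d₁₂ • a₂)
    (hper₂ : ∀ t, γ₂ (t + T₂) = γ₂ t + d₂₁ • a₁ + d₂₂ • a₂) :
    d₁₁ * d₂₂ - d₁₂ * d₂₁ = 0 :=
  stmt_13_general a₁ a₂ hindep H hH γ₁ γ₂ hγ₁ hγ₂ T₁ T₂ d₁₁ d₁₂ d₂₁ d₂₂ hper₁ hper₂
end
end

section
/- Let h > 0, ε ∈ ℝ, α, β ∈ ℝ with α² + β² = 1, and let v : ℝ² → ℝ. Let A be the rotation matrix with rows (α, β) and (−β, α), and define S : ℝ² → ℝ by S(y) = ½( −αβ y₁² + αβ y₂² + 2β² y₁ y₂ ). For a smooth f : ℝ² → ℂ define (Ĥf)(x) = ½(−ih∂₁+x₂)²f(x) + ½(−ih∂₂)²f(x) + εv(x)f(x), and set w(y) = v(A⁻¹y) and g(y) = e^{−iS(y)/h} f(A⁻¹y). Then for all y ∈ ℝ²: ½(−ih∂₁+y₂)²g(y) + ½(−ih∂₂)²g(y) + εw(y)g(y) = e^{−iS(y)/h} · (Ĥf)(A⁻¹y). -/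
/-!
Write `Ĥ = ½(D₁² + D₂²) + εv` with the magnetic derivatives `Dₑ = -ih∂ₑ + A(e)` of the Landau
one-form `A = x₂ dx₁`. Multiplying by the phase `e^{-iS/h}` shifts `A` by `-dS`, and pulling
back along the rotation `R` (the paper's `A⁻¹`) turns `Dₑ` into `D_{Re}`; the quadratic phase `S`
is exactly the one with `A - dS = R^*A`, so `Dₑ (e^{-iS/h} f ∘ R) = e^{-iS/h} (D_{Re} f) ∘ R`.
Since `Dₑ` is linear in `e`, `D_{Re₁}² + D_{Re₂}²` expands to `(α² + β²)(D₁² + D₂²)`, the cross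
terms cancelling.
-/

open Real

noncomputable section

/-- Partial derivative in the first variable of a function on `ℝ × ℝ`. -/
def pd1 (f : ℝ × ℝ → ℂ) (x : ℝ × ℝ) : ℂ := deriv (fun t => f (t, x.2)) x.1

/-- Partial derivative in the second variable of a function on `ℝ × ℝ`. -/
def pd2 (f : ℝ × ℝ → ℂ) (x : ℝ × ℝ) : ℂ := deriv (fun t => f (x.1, t)) x.2

/-- The magnetic Schrödinger operator `Ĥ = ½(−ih∂₁+x₂)² + ½(−ih∂₂)² + εv`. -/
def Hop (h ε : ℝ) (v : ℝ × ℝ → ℝ) (f : ℝ × ℝ → ℂ) : ℝ × ℝ → ℂ := fun x =>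
  (1 / 2 : ℂ) * (-(h : ℂ) ^ 2 * pd1 (pd1 f) x
      - 2 * Complex.I * (h : ℂ) * (x.2 : ℂ) * pd1 f x + (x.2 : ℂ) ^ 2 * f x)
    + (1 / 2 : ℂ) * (-(h : ℂ) ^ 2 * pd2 (pd2 f) x)
    + ((ε * v x : ℝ) : ℂ) * f x


namespace MagneticSchrodinger

variable {E : Type*} [NormedAddCommGroup E] [NormedSpace ℝ E]

/-- The magnetic derivative `-ih∂ₑ + A(e)` with vector potential the one-form `A`. -/
def magneticDeriv (h : ℝ) (A : E → E →L[ℝ] ℝ) (e : E) (F : E → ℂ) (x : E) : ℂ :=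
  -Complex.I * h * fderiv ℝ F x e + (A x e : ℂ) * F x

def magneticLaplacian (h : ℝ) (A : E → E →L[ℝ] ℝ) (e₁ e₂ : E) (F : E → ℂ) (x : E) : ℂ :=
  magneticDeriv h A e₁ (magneticDeriv h A e₁ F) x + magneticDeriv h A e₂ (magneticDeriv h A e₂ F) x

variable {h : ℝ} {A : E → E →L[ℝ] ℝ} {e : E} {F : E → ℂ} {x : E}

lemma magneticDeriv_add_dir (u w : E) :
    magneticDeriv h A (u + w) F x = magneticDeriv h A u F x + magneticDeriv h A w F x := by
  simp only [magneticDeriv, map_add]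
  push_cast
  ring

lemma magneticDeriv_smul_dir (c : ℝ) (u : E) :
    magneticDeriv h A (c • u) F x = c * magneticDeriv h A u F x := by
  simp only [magneticDeriv, map_smul, smul_eq_mul, Complex.real_smul]
  push_cast
  ring

lemma magneticDeriv_const_mul_add_const_mul {G H : E → ℂ} (hG : DifferentiableAt ℝ G x)
    (hH : DifferentiableAt ℝ H x) (a b : ℂ) :
    magneticDeriv h A e (fun y => a * G y + b * H y) x
      = a * magneticDeriv h A e G x + b * magneticDeriv h A e H x := by
  simp only [magneticDeriv]
  rw [fderiv_fun_add (hG.const_mul a) (hH.const_mul b), fderiv_const_mul hG,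
    fderiv_const_mul hH]
  simp only [add_apply, smul_apply, smul_eq_mul]
  ring

lemma magneticDeriv_phase_mul {S : E → ℝ} {S' : E →L[ℝ] ℝ} (hh : h ≠ 0)
    (hS : HasFDerivAt S S' x) (hF : DifferentiableAt ℝ F x) :
    magneticDeriv h A e (fun y => Complex.exp (-Complex.I * S y / h) * F y) x
      = Complex.exp (-Complex.I * S x / h) * (magneticDeriv h A e F x - S' e * F x) := by
  have hphase := (((Complex.ofRealCLM.hasFDerivAt.comp x hS).const_mul (-Complex.I)).mul_const
    (h : ℂ)⁻¹).cexp
  simp only [div_eq_mul_inv, magneticDeriv]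
  have hg : HasFDerivAt (fun y => Complex.exp (-Complex.I * S y * (h : ℂ)⁻¹) * F y) _ x :=
    hphase.fun_mul hF.hasFDerivAt
  rw [hg.fderiv]
  simp only [add_apply, smul_apply, smul_eq_mul, ContinuousLinearMap.comp_apply,
    Complex.ofRealCLM_apply, Function.comp_apply]
  have hh' : (h : ℂ) ≠ 0 := by exact_mod_cast hh
  set c := Complex.exp (-Complex.I * S x * (h : ℂ)⁻¹)
  linear_combination (Complex.I ^ 2 * c * F x * S' e) * mul_inv_cancel₀ hh'
    + (c * F x * S' e) * Complex.I_sq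

lemma magneticDeriv_phase_mul_comp {S : E → ℝ} (R : E →L[ℝ] E) (hh : h ≠ 0)
    (hS : ∀ y, HasFDerivAt S (A y - (A (R y)).comp R) y) (hF : Differentiable ℝ F) :
    magneticDeriv h A e (fun y => Complex.exp (-Complex.I * S y / h) * F (R y))
      = fun y => Complex.exp (-Complex.I * S y / h) * magneticDeriv h A (R e) F (R y) := by
  funext y
  rw [magneticDeriv_phase_mul (F := fun y => F (R y)) hh (hS y)
    ((hF (R y)).comp y R.differentiableAt)]
  congr 1
  simp only [magneticDeriv]
  rw [fderiv_fun_comp y (hF (R y)) R.differentiableAt, R.fderiv]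
  simp only [ContinuousLinearMap.comp_apply, sub_apply]
  push_cast
  ring

lemma magneticLaplacian_rotate {e₁ e₂ : E} {α β : ℝ} (hαβ : α ^ 2 + β ^ 2 = 1)
    (h₁ : DifferentiableAt ℝ (magneticDeriv h A e₁ F) x)
    (h₂ : DifferentiableAt ℝ (magneticDeriv h A e₂ F) x) :
    magneticLaplacian h A (α • e₁ + β • e₂) ((-β) • e₁ + α • e₂) F x
      = magneticLaplacian h A e₁ e₂ F x := by
  have hdir : ∀ a b : ℝ, magneticDeriv h A (a • e₁ + b • e₂) F
      = fun y => (a : ℂ) * magneticDeriv h A e₁ F y + (b : ℂ) * magneticDeriv h A e₂ F y := by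
    intro a b
    funext y
    rw [magneticDeriv_add_dir, magneticDeriv_smul_dir, magneticDeriv_smul_dir]
  simp only [magneticLaplacian, hdir, magneticDeriv_add_dir, magneticDeriv_smul_dir,
    magneticDeriv_const_mul_add_const_mul h₁ h₂]
  have hαβ' : (α : ℂ) ^ 2 + (β : ℂ) ^ 2 = 1 := by exact_mod_cast hαβ
  push_cast
  linear_combination (magneticDeriv h A e₁ (magneticDeriv h A e₁ F) x
    + magneticDeriv h A e₂ (magneticDeriv h A e₂ F) x) * hαβ'

lemma magneticLaplacian_phase_mul_comp {S : E → ℝ} {e₁ e₂ : E} (R : E →L[ℝ] E) (hh : h ≠ 0)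
    (hS : ∀ y, HasFDerivAt S (A y - (A (R y)).comp R) y) (hF : Differentiable ℝ F)
    (h₁ : Differentiable ℝ (magneticDeriv h A (R e₁) F))
    (h₂ : Differentiable ℝ (magneticDeriv h A (R e₂) F)) :
    magneticLaplacian h A e₁ e₂ (fun y => Complex.exp (-Complex.I * S y / h) * F (R y)) x
      = Complex.exp (-Complex.I * S x / h) * magneticLaplacian h A (R e₁) (R e₂) F (R x) := by
  simp only [magneticLaplacian, magneticDeriv_phase_mul_comp R hh hS hF,
    magneticDeriv_phase_mul_comp R hh hS h₁, magneticDeriv_phase_mul_comp R hh hS h₂]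
  ring

lemma contDiff_magneticDeriv {n : WithTop ℕ∞} (hA : ContDiff ℝ n A) (hF : ContDiff ℝ (n + 1) F) :
    ContDiff ℝ n (magneticDeriv h A e F) := by
  have hDF : ContDiff ℝ n fun y => fderiv ℝ F y e :=
    (hF.fderiv_right le_rfl).clm_apply contDiff_const
  have hAe : ContDiff ℝ n fun y => (A y e : ℂ) :=
    Complex.ofRealCLM.contDiff.comp (hA.clm_apply contDiff_const)
  exact (contDiff_const.mul hDF).add (hAe.mul (hF.of_le le_self_add))

end MagneticSchrodinger

open MagneticSchrodinger

section Plane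

/-- The Landau gauge `x₂ dx₁`, the vector potential of `Ĥ`. -/
def landau (x : ℝ × ℝ) : ℝ × ℝ →L[ℝ] ℝ := x.2 • ContinuousLinearMap.fst ℝ ℝ ℝ

lemma contDiff_landau {n : WithTop ℕ∞} : ContDiff ℝ n landau :=
  contDiff_snd.smul contDiff_const

def planeRotation (α β : ℝ) : ℝ × ℝ →L[ℝ] ℝ × ℝ :=
  (α • ContinuousLinearMap.fst ℝ ℝ ℝ - β • ContinuousLinearMap.snd ℝ ℝ ℝ).prod
    (β • ContinuousLinearMap.fst ℝ ℝ ℝ + α • ContinuousLinearMap.snd ℝ ℝ ℝ)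

variable {α β : ℝ}

@[simp]
lemma planeRotation_apply (y : ℝ × ℝ) :
    planeRotation α β y = (α * y.1 - β * y.2, β * y.1 + α * y.2) := by
  simp [planeRotation]

lemma planeRotation_fst_unit :
    planeRotation α β (1, 0) = α • ((1 : ℝ), (0 : ℝ)) + β • ((0 : ℝ), (1 : ℝ)) := by
  simp

lemma planeRotation_snd_unit :
    planeRotation α β (0, 1) = (-β) • ((1 : ℝ), (0 : ℝ)) + α • ((0 : ℝ), (1 : ℝ)) := by
  simp

def gaugePhase (α β : ℝ) (y : ℝ × ℝ) : ℝ :=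
  1 / 2 * (-(α * β) * y.1 ^ 2 + α * β * y.2 ^ 2 + 2 * β ^ 2 * y.1 * y.2)

lemma contDiff_gaugePhase {n : WithTop ℕ∞} : ContDiff ℝ n (gaugePhase α β) := by
  unfold gaugePhase
  fun_prop

lemma hasFDerivAt_gaugePhase (hαβ : α ^ 2 + β ^ 2 = 1) (y : ℝ × ℝ) :
    HasFDerivAt (gaugePhase α β)
      (landau y - (landau (planeRotation α β y)).comp (planeRotation α β)) y := by
  have h1 : HasFDerivAt (fun y : ℝ × ℝ => y.1) (ContinuousLinearMap.fst ℝ ℝ ℝ) y := hasFDerivAt_fst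
  have h2 : HasFDerivAt (fun y : ℝ × ℝ => y.2) (ContinuousLinearMap.snd ℝ ℝ ℝ) y := hasFDerivAt_snd
  have := ((((h1.pow 2).const_mul (-(α * β))).add ((h2.pow 2).const_mul (α * β))).add
    ((h1.const_mul (2 * β ^ 2)).mul h2)).const_mul (1 / 2)
  refine this.congr_fderiv ?_
  refine ContinuousLinearMap.ext fun e => ?_
  simp only [one_div, Nat.add_one_sub_one, pow_one, nsmul_eq_mul, Nat.cast_ofNat, neg_smul,
    smul_add, smul_neg, add_apply, neg_apply, smul_apply, ContinuousLinearMap.coe_fst',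
    smul_eq_mul, ContinuousLinearMap.coe_snd', landau, planeRotation_apply,
    ContinuousLinearMap.smul_comp, sub_apply, ContinuousLinearMap.comp_apply]
  linear_combination y.2 * e.1 * hαβ

lemma pd1_eq_fderiv {F : ℝ × ℝ → ℂ} {x : ℝ × ℝ} (hF : DifferentiableAt ℝ F x) :
    pd1 F x = fderiv ℝ F x (1, 0) :=
  (hF.hasFDerivAt.comp_hasDerivAt x.1
    ((hasDerivAt_id x.1).prodMk (hasDerivAt_const x.1 x.2))).deriv

lemma pd2_eq_fderiv {F : ℝ × ℝ → ℂ} {x : ℝ × ℝ} (hF : DifferentiableAt ℝ F x) :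
    pd2 F x = fderiv ℝ F x (0, 1) :=
  (hF.hasFDerivAt.comp_hasDerivAt x.2
    ((hasDerivAt_const x.2 x.1).prodMk (hasDerivAt_id x.2))).deriv

variable {h : ℝ} {F : ℝ × ℝ → ℂ}

lemma magneticDeriv_landau_fst (hF : Differentiable ℝ F) :
    magneticDeriv h landau (1, 0) F = fun x => -Complex.I * h * pd1 F x + x.2 * F x := by
  funext x
  simp [magneticDeriv, landau, pd1_eq_fderiv (hF x)]

lemma magneticDeriv_landau_snd (hF : Differentiable ℝ F) :
    magneticDeriv h landau (0, 1) F = fun x => -Complex.I * h * pd2 F x := by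
  funext x
  simp [magneticDeriv, landau, pd2_eq_fderiv (hF x)]

lemma Hop_eq_magneticLaplacian (ε : ℝ) (v : ℝ × ℝ → ℝ) (hF : ContDiff ℝ 2 F) (x : ℝ × ℝ) :
    Hop h ε v F x = 1 / 2 * magneticLaplacian h landau (1, 0) (0, 1) F x + (ε * v x : ℝ) * F x := by
  have hF' : ContDiff ℝ (1 + 1) F := hF
  have hF₁ : Differentiable ℝ F := hF.differentiable (by norm_num)
  have hM : ∀ e, Differentiable ℝ (magneticDeriv h landau e F) := fun e =>
    (contDiff_magneticDeriv contDiff_landau hF').differentiable one_ne_zero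
  have hpd1 : Differentiable ℝ (pd1 F) := by
    rw [show pd1 F = fun z => fderiv ℝ F z (1, 0) from funext fun z => pd1_eq_fderiv (hF₁ z)]
    exact ((hF'.fderiv_right le_rfl).clm_apply contDiff_const).differentiable one_ne_zero
  have hline : ∀ G : ℝ × ℝ → ℂ, Differentiable ℝ G → Differentiable ℝ (fun t => G (t, x.2)) :=
    fun G hG => hG.comp (differentiable_id.prodMk (differentiable_const _))
  have h11 : pd1 (fun z => -Complex.I * h * pd1 F z + z.2 * F z) x
      = -Complex.I * h * pd1 (pd1 F) x + x.2 * pd1 F x := by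
    change deriv (fun t => -Complex.I * h * pd1 F (t, x.2) + (x.2 : ℂ) * F (t, x.2)) x.1 = _
    rw [deriv_fun_add ((hline _ hpd1 _).const_mul _) ((hline _ hF₁ _).const_mul _),
      deriv_const_mul _ (hline _ hpd1 _), deriv_const_mul _ (hline _ hF₁ _)]
    rfl
  have h22 : pd2 (fun z => -Complex.I * h * pd2 F z) x = -Complex.I * h * pd2 (pd2 F) x := by
    simp only [pd2, deriv_const_mul_field']
  rw [magneticLaplacian, magneticDeriv_landau_fst (hM _), magneticDeriv_landau_snd (hM _),
    magneticDeriv_landau_fst hF₁, magneticDeriv_landau_snd hF₁]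
  beta_reduce
  rw [h11, h22]
  simp only [Hop]
  linear_combination (-(h : ℂ) ^ 2 / 2 * (pd1 (pd1 F) x + pd2 (pd2 F) x)) * Complex.I_sq

end Plane

theorem stmt_16 (h : ℝ) (hh : 0 < h) (ε α β : ℝ) (hαβ : α ^ 2 + β ^ 2 = 1)
    (v : ℝ × ℝ → ℝ) (f : ℝ × ℝ → ℂ) (hf : ContDiff ℝ (⊤ : ℕ∞) f)
    (S : ℝ × ℝ → ℝ)
    (hS : ∀ y : ℝ × ℝ, S y = (1 / 2) * (-(α * β) * y.1 ^ 2 + α * β * y.2 ^ 2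
      + 2 * β ^ 2 * y.1 * y.2))
    (Ainv : ℝ × ℝ → ℝ × ℝ)
    (hAinv : ∀ y : ℝ × ℝ, Ainv y = (α * y.1 - β * y.2, β * y.1 + α * y.2))
    (w : ℝ × ℝ → ℝ) (hw : ∀ y, w y = v (Ainv y))
    (g : ℝ × ℝ → ℂ)
    (hg : ∀ y : ℝ × ℝ, g y =
      Complex.exp (-Complex.I * ((S y : ℝ) : ℂ) / (h : ℂ)) * f (Ainv y)) :
    ∀ y : ℝ × ℝ,
      (1 / 2 : ℂ) * (-(h : ℂ) ^ 2 * pd1 (pd1 g) y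
          - 2 * Complex.I * (h : ℂ) * (y.2 : ℂ) * pd1 g y + (y.2 : ℂ) ^ 2 * g y)
        + (1 / 2 : ℂ) * (-(h : ℂ) ^ 2 * pd2 (pd2 g) y)
        + ((ε * w y : ℝ) : ℂ) * g y
      = Complex.exp (-Complex.I * ((S y : ℝ) : ℂ) / (h : ℂ)) * Hop h ε v f (Ainv y) := by
  intro y
  change Hop h ε w g y = _
  obtain rfl : S = gaugePhase α β := funext hS
  obtain rfl : Ainv = planeRotation α β := funext fun y => by rw [hAinv, planeRotation_apply]
  obtain rfl : w = fun y => v (planeRotation α β y) := funext hw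
  obtain rfl : g = fun y => Complex.exp (-Complex.I * gaugePhase α β y / h)
      * f (planeRotation α β y) := funext hg
  have hf₂ : ContDiff ℝ 2 f := hf.of_le (by norm_cast)
  have hMf : ∀ e, Differentiable ℝ (magneticDeriv h landau e f) := fun e =>
    (contDiff_magneticDeriv contDiff_landau hf₂).differentiable one_ne_zero
  have hg₂ : ContDiff ℝ 2 fun y =>
      Complex.exp (-Complex.I * gaugePhase α β y / h) * f (planeRotation α β y) :=
    ((contDiff_const.mul (Complex.ofRealCLM.contDiff.comp contDiff_gaugePhase)).div_const
      _).cexp.mul (hf₂.comp (planeRotation α β).contDiff)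
  rw [Hop_eq_magneticLaplacian ε _ hg₂, Hop_eq_magneticLaplacian ε v hf₂,
    magneticLaplacian_phase_mul_comp _ hh.ne' (hasFDerivAt_gaugePhase hαβ)
      (hf₂.differentiable two_ne_zero) (hMf _) (hMf _),
    planeRotation_fst_unit, planeRotation_snd_unit,
    magneticLaplacian_rotate hαβ (hMf _ _) (hMf _ _)]
  ring
end
end
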